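/- For all real parameters z, z', the function C(s) = (s⁰)² − (s¹)² − (s²)² − (s³)² on ℝ⁴ is a Casimir function of each of the three quadratic Poisson bivectors π_I, π_II, π_III; that is, for every μ ∈ {0,1,2,3} and every s ∈ ℝ⁴, Σ_{ν=0}^{3} π^{μν}(s) ∂C/∂s^ν (s) = 0 holds for π = π_I, π = π_II and π = π_III. -/

import Mathlib

namespace NCSTPoisson

noncomputable section

/-- The ambient spacetime coordinates `(s⁰,s¹,s²,s³)`. -/
abbrev S : Type := Fin 4 → ℝ

/-- The partial derivative `∂f/∂s^σ` at `s`. -/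
def pd (σ : Fin 4) (f : S → ℝ) (s : S) : ℝ := fderiv ℝ f s (Pi.single σ 1)

/-- The Type I Poisson bivector on `ℝ⁴` in ambient coordinates:
`π^{01} = z(s⁰+s¹)s²`, `π^{02} = −z[(s⁰+s¹)s¹ + (s³)²] − z'(s⁰+s¹)s³`,
`π^{03} = z s²s³ + z'(s⁰+s¹)s²`, `π^{12} = −z[(s⁰+s¹)s⁰ − (s³)²] + z'(s⁰+s¹)s³`,
`π^{13} = −z s²s³ − z'(s⁰+s¹)s²`, `π^{23} = z(s⁰+s¹)s³ + z'(s⁰+s¹)²`,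
`π^{νμ} = −π^{μν}`. -/
def piI (z z' : ℝ) (s : S) : Fin 4 → Fin 4 → ℝ :=
  ![![0, z * (s 0 + s 1) * s 2,
      -(z * ((s 0 + s 1) * s 1 + (s 3) ^ 2)) - z' * (s 0 + s 1) * s 3,
      z * s 2 * s 3 + z' * (s 0 + s 1) * s 2],
    ![-(z * (s 0 + s 1) * s 2), 0,
      -(z * ((s 0 + s 1) * s 0 - (s 3) ^ 2)) + z' * (s 0 + s 1) * s 3,
      -(z * s 2 * s 3) - z' * (s 0 + s 1) * s 2],
    ![-(-(z * ((s 0 + s 1) * s 1 + (s 3) ^ 2)) - z' * (s 0 + s 1) * s 3),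
      -(-(z * ((s 0 + s 1) * s 0 - (s 3) ^ 2)) + z' * (s 0 + s 1) * s 3), 0,
      z * (s 0 + s 1) * s 3 + z' * (s 0 + s 1) ^ 2],
    ![-(z * s 2 * s 3 + z' * (s 0 + s 1) * s 2),
      -(-(z * s 2 * s 3) - z' * (s 0 + s 1) * s 2),
      -(z * (s 0 + s 1) * s 3 + z' * (s 0 + s 1) ^ 2), 0]]

/-- The Type II Poisson bivector on `ℝ⁴`:
`π^{02} = z s¹s³`, `π^{03} = −z s¹s²`, `π^{12} = z s⁰s³`, `π^{13} = −z s⁰s²`,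
`π^{01} = π^{23} = 0`, `π^{νμ} = −π^{μν}`. -/
def piII (z : ℝ) (s : S) : Fin 4 → Fin 4 → ℝ :=
  ![![0, 0, z * s 1 * s 3, -(z * s 1 * s 2)],
    ![0, 0, z * s 0 * s 3, -(z * s 0 * s 2)],
    ![-(z * s 1 * s 3), -(z * s 0 * s 3), 0, 0],
    ![z * s 1 * s 2, z * s 0 * s 2, 0, 0]]

/-- The Type III Poisson bivector on `ℝ⁴`:
`π^{01} = z(s⁰+s¹)s²`, `π^{02} = −z(s⁰+s¹)s¹`, `π^{12} = −z(s⁰+s¹)s⁰`,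
`π^{03} = π^{13} = π^{23} = 0`, `π^{νμ} = −π^{μν}`. -/
def piIII (z : ℝ) (s : S) : Fin 4 → Fin 4 → ℝ :=
  ![![0, z * (s 0 + s 1) * s 2, -(z * (s 0 + s 1) * s 1), 0],
    ![-(z * (s 0 + s 1) * s 2), 0, -(z * (s 0 + s 1) * s 0), 0],
    ![z * (s 0 + s 1) * s 1, z * (s 0 + s 1) * s 0, 0, 0],
    ![0, 0, 0, 0]]

/-- The Jacobiator `Σ_σ (π^{μσ}∂_σ π^{νρ} + π^{νσ}∂_σ π^{ρμ} + π^{ρσ}∂_σ π^{μν})`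
of a bivector field `π` on `ℝ⁴`. -/
def jacobiator (π : S → Fin 4 → Fin 4 → ℝ) (μ ν ρ : Fin 4) (s : S) : ℝ :=
  ∑ σ : Fin 4,
    (π s μ σ * pd σ (fun t => π t ν ρ) s
     + π s ν σ * pd σ (fun t => π t ρ μ) s
     + π s ρ σ * pd σ (fun t => π t μ ν) s)

/-- The quadratic Casimir function `C(s) = (s⁰)² − (s¹)² − (s²)² − (s³)²`. -/
def Cas (s : S) : ℝ := (s 0) ^ 2 - (s 1) ^ 2 - (s 2) ^ 2 - (s 3) ^ 2

/-! The gradient of `C` is `2 s_ν`, where `s_ν = η_{νν} s^ν` are the coordinates lowered by the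
Minkowski metric `η = diag(1, -1, -1, -1)`. Hence `C` is a Casimir of `π` exactly when every row
`π^{μ·}` is Euclidean-orthogonal to `(s_ν)`, and for the three bivectors this is a polynomial
identity checked row by row. -/

def lower (s : S) : S := ![s 0, -s 1, -s 2, -s 3]

lemma hasFDerivAt_Cas (s : S) :
    HasFDerivAt Cas (∑ ν : Fin 4, (2 * lower s ν) • (ContinuousLinearMap.proj ν : S →L[ℝ] ℝ)) s := by
  have hsq (i : Fin 4) := (hasFDerivAt_apply (𝕜 := ℝ) i s).pow 2
  refine ((((hsq 0).sub (hsq 1)).sub (hsq 2)).sub (hsq 3)).congr_fderiv ?_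
  ext v
  simp only [Fin.sum_univ_four, lower, sub_apply, add_apply, smul_apply,
    ContinuousLinearMap.proj_apply, smul_eq_mul, nsmul_eq_mul, Matrix.cons_val]
  ring

lemma pd_Cas (ν : Fin 4) (s : S) : pd ν Cas s = 2 * lower s ν := by
  simp [pd, (hasFDerivAt_Cas s).fderiv, Pi.single_apply]

lemma sum_mul_pd_Cas_eq_zero_iff (v : Fin 4 → ℝ) (s : S) :
    ∑ ν : Fin 4, v ν * pd ν Cas s = 0 ↔ v ⬝ᵥ lower s = 0 := by
  simp only [pd_Cas, mul_left_comm _ (2 : ℝ), ← Finset.mul_sum, dotProduct]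
  simp

lemma piI_dotProduct_lower (z z' : ℝ) (μ : Fin 4) (s : S) : piI z z' s μ ⬝ᵥ lower s = 0 := by
  fin_cases μ <;>
    simp only [dotProduct, Fin.sum_univ_four, piI, lower, Matrix.cons_val, Fin.zero_eta, Fin.mk_one,
      Fin.reduceFinMk] <;>
    ring

lemma piII_dotProduct_lower (z : ℝ) (μ : Fin 4) (s : S) : piII z s μ ⬝ᵥ lower s = 0 := by
  fin_cases μ <;>
    simp only [dotProduct, Fin.sum_univ_four, piII, lower, Matrix.cons_val, Fin.zero_eta, Fin.mk_one,
      Fin.reduceFinMk] <;>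
    ring

lemma piIII_dotProduct_lower (z : ℝ) (μ : Fin 4) (s : S) : piIII z s μ ⬝ᵥ lower s = 0 := by
  fin_cases μ <;>
    simp only [dotProduct, Fin.sum_univ_four, piIII, lower, Matrix.cons_val, Fin.zero_eta, Fin.mk_one,
      Fin.reduceFinMk] <;>
    ring

/-- `C` is a Casimir function of each of `π_I`, `π_II`, `π_III`:
`Σ_ν π^{μν} ∂_ν C = 0` for all `μ` and all `s`. -/
theorem Cas_is_casimir (z z' : ℝ) :
    (∀ (μ : Fin 4) (s : S), ∑ ν : Fin 4, piI z z' s μ ν * pd ν Cas s = 0) ∧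
    (∀ (μ : Fin 4) (s : S), ∑ ν : Fin 4, piII z s μ ν * pd ν Cas s = 0) ∧
    (∀ (μ : Fin 4) (s : S), ∑ ν : Fin 4, piIII z s μ ν * pd ν Cas s = 0) := by
  simp only [sum_mul_pd_Cas_eq_zero_iff]
  exact ⟨piI_dotProduct_lower z z', piII_dotProduct_lower z, piIII_dotProduct_lower z⟩

end
end NCSTPoisson
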